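/- arXiv:2312.00676 — 2 statements merged into one kernel-verified Lean document; each statement's English description precedes it below -/
import Mathlib

section
/- Let m, n, r, d be integers with m, n ≥ 2, d ≥ 1 and 0 < r < min{m,n}, let a be an integer with 0 ≤ a ≤ rd, and let ρ_1,…,ρ_r be nonnegative integers with ρ_i ≤ d for all i and Σ_{i=1}^r ρ_i = a. Set d_R := ⌊a/r⌋ and t_R := a mod r. Then A^{m×n}_{d,r,a}(ρ_1,…,ρ_r) ⊆ closure( A^{m×n}_{d,r,a}(d_R+1,…,d_R+1, d_R,…,d_R) ), where in the last list d_R+1 is repeated t_R times and d_R is repeated r − t_R times. -/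
open Polynomial Matrix

noncomputable section

variable {F : Type*} [Field F]

/-- The matrix over the field of rational functions associated with a polynomial matrix. -/
def toRat {m n : ℕ} (P : Matrix (Fin m) (Fin n) F[X]) : Matrix (Fin m) (Fin n) (RatFunc F) :=
  P.map (algebraMap F[X] (RatFunc F))

/-- The normal rank of a polynomial matrix: its rank over the field of rational functions. -/
def normalRank {m n : ℕ} (P : Matrix (Fin m) (Fin n) F[X]) : ℕ := (toRat P).rank

/-- The degree of a polynomial matrix: the maximum of the degrees of its entries,
`⊥` (i.e. -∞) for the zero matrix. -/
def matDeg {m n : ℕ} (P : Matrix (Fin m) (Fin n) F[X]) : WithBot ℕ :=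
  Finset.univ.sup fun i : Fin m => Finset.univ.sup fun j : Fin n => (P i j).degree

/-- Degree of the i-th row. -/
def rowDeg {m n : ℕ} (P : Matrix (Fin m) (Fin n) F[X]) (i : Fin m) : WithBot ℕ :=
  Finset.univ.sup fun j : Fin n => (P i j).degree

/-- Degree of the j-th column. -/
def colDeg {m n : ℕ} (P : Matrix (Fin m) (Fin n) F[X]) (j : Fin n) : WithBot ℕ :=
  Finset.univ.sup fun i : Fin m => (P i j).degree

/-- Degree of the i-th row as a natural number (0 for a zero row). -/
def rowDegNat {m n : ℕ} (P : Matrix (Fin m) (Fin n) F[X]) (i : Fin m) : ℕ :=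
  Finset.univ.sup fun j : Fin n => (P i j).natDegree

/-- Degree of the j-th column as a natural number (0 for a zero column). -/
def colDegNat {m n : ℕ} (P : Matrix (Fin m) (Fin n) F[X]) (j : Fin n) : ℕ :=
  Finset.univ.sup fun i : Fin m => (P i j).natDegree

/-- Highest-row-degree coefficient matrix. -/
def hrMatrix {m n : ℕ} (P : Matrix (Fin m) (Fin n) F[X]) : Matrix (Fin m) (Fin n) F :=
  Matrix.of fun i j => (P i j).coeff (rowDegNat P i)

/-- Highest-column-degree coefficient matrix. -/
def hcMatrix {m n : ℕ} (P : Matrix (Fin m) (Fin n) F[X]) : Matrix (Fin m) (Fin n) F :=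
  Matrix.of fun i j => (P i j).coeff (colDegNat P j)

/-- A polynomial matrix is row reduced if its highest-row-degree coefficient matrix has
full row rank. -/
def RowReduced {m n : ℕ} (P : Matrix (Fin m) (Fin n) F[X]) : Prop := (hrMatrix P).rank = m

/-- A polynomial matrix is column reduced if its highest-column-degree coefficient matrix has
full column rank. -/
def ColReduced {m n : ℕ} (P : Matrix (Fin m) (Fin n) F[X]) : Prop := (hcMatrix P).rank = n

/-- Evaluation of a polynomial matrix at a point of the algebraic closure. -/
def evalMat {m n : ℕ} (P : Matrix (Fin m) (Fin n) F[X]) (x : AlgebraicClosure F) :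
    Matrix (Fin m) (Fin n) (AlgebraicClosure F) :=
  Matrix.of fun i j => aeval x (P i j)

/-- The rows of `P` form a minimal basis of the rational subspace they span (Forney's
characterization): full row rank at every point of the algebraic closure, and row reduced. -/
def IsMinimalRowBasis {m n : ℕ} (P : Matrix (Fin m) (Fin n) F[X]) : Prop :=
  (∀ x : AlgebraicClosure F, (evalMat P x).rank = m) ∧ RowReduced P

/-- The columns of `P` form a minimal basis of the rational subspace they span. -/
def IsMinimalColBasis {m n : ℕ} (P : Matrix (Fin m) (Fin n) F[X]) : Prop :=
  (∀ x : AlgebraicClosure F, (evalMat P x).rank = n) ∧ ColReduced P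

/-- The column space Col(P) over the field of rational functions. -/
def colSpace {m n : ℕ} (P : Matrix (Fin m) (Fin n) F[X]) :
    Submodule (RatFunc F) (Fin m → RatFunc F) :=
  LinearMap.range (toRat P).mulVecLin

/-- The row space Row(P) over the field of rational functions. -/
def rowSpace {m n : ℕ} (P : Matrix (Fin m) (Fin n) F[X]) :
    Submodule (RatFunc F) (Fin n → RatFunc F) :=
  LinearMap.range (toRat P)ᵀ.mulVecLin

/-- The right nullspace N_r(P). -/
def rightNull {m n : ℕ} (P : Matrix (Fin m) (Fin n) F[X]) :
    Submodule (RatFunc F) (Fin n → RatFunc F) :=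
  LinearMap.ker (toRat P).mulVecLin

/-- The left nullspace N_ℓ(P). -/
def leftNull {m n : ℕ} (P : Matrix (Fin m) (Fin n) F[X]) :
    Submodule (RatFunc F) (Fin m → RatFunc F) :=
  LinearMap.ker (toRat P)ᵀ.mulVecLin
/-- Coefficient tuple of a complex polynomial matrix, regarding it as an element of the
space ℂ[λ]^{m×n}_d of polynomial matrices of degree at most d. -/
def coeffs (d : ℕ) {m n : ℕ} (P : Matrix (Fin m) (Fin n) ℂ[X]) :
    Fin (d + 1) → Fin m → Fin n → ℂ :=
  fun k i j => (P i j).coeff k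

/-- Closure of a set of polynomial matrices inside ℂ[λ]^{m×n}_d, with respect to the
topology induced by the (Frobenius-type) metric on the coefficient tuples, which coincides
with the product topology on the coefficients. -/
def polyClosure (d : ℕ) {m n : ℕ} (S : Set (Matrix (Fin m) (Fin n) ℂ[X])) :
    Set (Matrix (Fin m) (Fin n) ℂ[X]) :=
  {P | matDeg P ≤ (d : WithBot ℕ) ∧ coeffs d P ∈ closure (coeffs d '' S)}
/-- The set A^{m×n}_{d,r,a}(ρ₁,…,ρ_r) of products L R with prescribed row degrees of R
and matching column degrees of L (deg L_{*i} = d − ρ_i, deg R_{i*} = ρ_i). -/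
def Arho (m n d r : ℕ) (ρ : Fin r → ℕ) : Set (Matrix (Fin m) (Fin n) ℂ[X]) :=
  {P | ∃ (L : Matrix (Fin m) (Fin r) ℂ[X]) (R : Matrix (Fin r) (Fin n) ℂ[X]),
    P = L * R ∧ ∀ i : Fin r,
      rowDeg R i = ((ρ i : ℕ) : WithBot ℕ) ∧ colDeg L i = ((d - ρ i : ℕ) : WithBot ℕ)}

section Aux
variable {F : Type*} [Field F]

lemma sup_deg_eq_iff {n : ℕ} (p : Fin n → F[X]) (N : ℕ) :
    (Finset.univ.sup fun j => (p j).degree) = (N : WithBot ℕ) ↔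
      (∀ j k, N < k → (p j).coeff k = 0) ∧ ∃ j, (p j).coeff N ≠ 0 := by
  constructor
  · intro h
    have hle : ∀ j, (p j).degree ≤ (N : WithBot ℕ) := fun j =>
      h ▸ Finset.le_sup (f := fun j => (p j).degree) (Finset.mem_univ j)
    refine ⟨fun j k hk => ?_, ?_⟩
    · exact Polynomial.coeff_eq_zero_of_degree_lt
        (lt_of_le_of_lt (hle j) (by exact_mod_cast hk))
    · by_contra hc
      push_neg at hc
      have hlt : ∀ j, (p j).degree < (N : WithBot ℕ) := by
        intro j
        rcases lt_or_eq_of_le (hle j) with h' | h'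
        · exact h'
        · exact absurd (Polynomial.coeff_ne_zero_of_eq_degree h') (not_not.2 (hc j))
      have : (Finset.univ.sup fun j => (p j).degree) < (N : WithBot ℕ) :=
        (Finset.sup_lt_iff (by exact_mod_cast WithBot.bot_lt_coe N)).2 fun j _ => hlt j
      simp [h] at this
  · rintro ⟨h1, j, hj⟩
    apply le_antisymm
    · apply Finset.sup_le
      intro j' _
      rw [Polynomial.degree_le_iff_coeff_zero]
      intro k hk
      exact h1 j' k (by exact_mod_cast hk)
    · exact le_trans (Polynomial.le_degree_of_ne_zero hj)
        (Finset.le_sup (f := fun j => (p j).degree) (Finset.mem_univ j))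

lemma rowDeg_eq_iff {m n : ℕ} (P : Matrix (Fin m) (Fin n) F[X]) (i : Fin m) (N : ℕ) :
    rowDeg P i = (N : WithBot ℕ) ↔
      (∀ j k, N < k → (P i j).coeff k = 0) ∧ ∃ j, (P i j).coeff N ≠ 0 :=
  sup_deg_eq_iff (fun j => P i j) N

lemma colDeg_eq_iff {m n : ℕ} (P : Matrix (Fin m) (Fin n) F[X]) (j : Fin n) (N : ℕ) :
    colDeg P j = (N : WithBot ℕ) ↔
      (∀ i k, N < k → (P i j).coeff k = 0) ∧ ∃ i, (P i j).coeff N ≠ 0 :=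
  sup_deg_eq_iff (fun i => P i j) N

end Aux

lemma matDeg_le_of_Arho {m n r d : ℕ} {ρ : Fin r → ℕ} (hρd : ∀ i, ρ i ≤ d)
    {P : Matrix (Fin m) (Fin n) ℂ[X]} (hP : P ∈ Arho m n d r ρ) :
    matDeg P ≤ (d : WithBot ℕ) := by
  obtain ⟨L, R, rfl, h⟩ := hP
  apply Finset.sup_le
  intro i _
  apply Finset.sup_le
  intro j _
  rw [Matrix.mul_apply]
  refine le_trans (Polynomial.degree_sum_le _ _) ?_
  apply Finset.sup_le
  intro k _
  refine le_trans (Polynomial.degree_mul_le _ _) ?_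
  have h1 : (L i k).degree ≤ ((d - ρ k : ℕ) : WithBot ℕ) :=
    (h k).2 ▸ Finset.le_sup (f := fun i => (L i k).degree) (Finset.mem_univ i)
  have h2 : (R k j).degree ≤ ((ρ k : ℕ) : WithBot ℕ) :=
    (h k).1 ▸ Finset.le_sup (f := fun j => (R k j).degree) (Finset.mem_univ j)
  calc (L i k).degree + (R k j).degree
      ≤ ((d - ρ k : ℕ) : WithBot ℕ) + ((ρ k : ℕ) : WithBot ℕ) := add_le_add h1 h2
    _ = (((d - ρ k) + ρ k : ℕ) : WithBot ℕ) := by rw [Nat.cast_add]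
    _ ≤ (d : WithBot ℕ) := by
        have : (d - ρ k) + ρ k = d := by have := hρd k; omega
        rw [this]

lemma polyClosure_trans {d m n : ℕ} {S T : Set (Matrix (Fin m) (Fin n) ℂ[X])}
    (h : S ⊆ polyClosure d T) : polyClosure d S ⊆ polyClosure d T := by
  rintro P ⟨hdeg, hcl⟩
  refine ⟨hdeg, ?_⟩
  have hsub : coeffs d '' S ⊆ closure (coeffs d '' T) := by
    rintro _ ⟨Q, hQ, rfl⟩
    exact (h hQ).2
  exact closure_minimal hsub isClosed_closure hcl

lemma Arho_subset_polyClosure_self {m n r d : ℕ} {ρ : Fin r → ℕ} (hρd : ∀ i, ρ i ≤ d) :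
    Arho m n d r ρ ⊆ polyClosure d (Arho m n d r ρ) :=
  fun _ hP => ⟨matDeg_le_of_Arho hρd hP, subset_closure (Set.mem_image_of_mem _ hP)⟩

lemma coeffCXp (a : ℂ) (t k : ℕ) :
    (Polynomial.C a * Polynomial.X ^ t).coeff k = if k = t then a else 0 :=
  Polynomial.coeff_C_mul_X_pow a t k

lemma coeffCmulXp (p : ℂ[X]) (a : ℂ) (t k : ℕ) :
    (Polynomial.C a * (p * Polynomial.X ^ t)).coeff k =
      if t ≤ k then a * p.coeff (k - t) else 0 := by
  rw [Polynomial.coeff_C_mul, Polynomial.coeff_mul_X_pow', mul_ite, mul_zero]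

lemma swap_step {m n r d : ℕ} (ρ : Fin r → ℕ) (hρd : ∀ i, ρ i ≤ d)
    (i0 j0 : Fin r) (hij : i0 ≠ j0) (hlt : ρ j0 < ρ i0) :
    Arho m n d r ρ ⊆ polyClosure d (Arho m n d r
      (Function.update (Function.update ρ i0 (ρ i0 - 1)) j0 (ρ j0 + 1))) := by
  set ρ' := Function.update (Function.update ρ i0 (ρ i0 - 1)) j0 (ρ j0 + 1) with hρ'def
  intro P hP
  have hdegP : matDeg P ≤ (d : WithBot ℕ) := matDeg_le_of_Arho hρd hP
  obtain ⟨L, R, rfl, hLR⟩ := hP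
  set b := ρ j0 with hb
  obtain ⟨e, he⟩ : ∃ e, ρ i0 = b + 1 + e := ⟨ρ i0 - (b + 1), by omega⟩
  obtain ⟨f, hf⟩ : ∃ f, d = b + 1 + e + f := ⟨d - (b + 1 + e), by have := hρd i0; omega⟩
  have hρ'i0 : ρ' i0 = b + e := by
    simp only [hρ'def, Function.update_apply, if_neg hij, eq_self_iff_true, if_true]
    omega
  have hρ'j0 : ρ' j0 = b + 1 := by
    simp only [hρ'def, Function.update_apply, eq_self_iff_true, if_true]
  have hRi0 : rowDeg R i0 = ((b + 1 + e : ℕ) : WithBot ℕ) := by rw [(hLR i0).1, he]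
  have hRj0 : rowDeg R j0 = ((b : ℕ) : WithBot ℕ) := (hLR j0).1
  have hLi0 : colDeg L i0 = ((f : ℕ) : WithBot ℕ) := by
    have h : d - ρ i0 = f := by omega
    rw [(hLR i0).2, h]
  have hLj0 : colDeg L j0 = ((e + f + 1 : ℕ) : WithBot ℕ) := by
    have h : d - ρ j0 = e + f + 1 := by omega
    rw [(hLR j0).2, h]
  rw [rowDeg_eq_iff] at hRi0 hRj0
  rw [colDeg_eq_iff] at hLi0 hLj0
  obtain ⟨hvR1, ju, hju⟩ := hRi0
  obtain ⟨hvR2, jstar, hjstar⟩ := hRj0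
  obtain ⟨hvL1, istar, histar⟩ := hLi0
  obtain ⟨hvL2, iv, hiv⟩ := hLj0
  set u : Fin n → ℂ := fun j => (R i0 j).coeff (b + 1 + e) with hu
  set v : Fin m → ℂ := fun i => (L i j0).coeff (e + f + 1) with hv
  set bad1 : ℂ := ((R i0 jstar).coeff (b + e) / (R j0 jstar).coeff b)⁻¹ with hbad1
  set bad2 : ℂ := (-((L istar j0).coeff (e + f)) / (L istar i0).coeff f)⁻¹ with hbad2
  set Rε : ℂ → Matrix (Fin r) (Fin n) ℂ[X] := fun ε => Matrix.of fun k j =>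
    if k = i0 then R i0 j - C (u j) * X ^ (b + 1 + e) - C ε⁻¹ * (R j0 j * X ^ e)
    else if k = j0 then R j0 j + C (ε * u j) * X ^ (b + 1)
    else R k j with hRε
  set Lε : ℂ → Matrix (Fin m) (Fin r) ℂ[X] := fun ε => Matrix.of fun i k =>
    if k = i0 then L i i0 - C (ε * v i) * X ^ (f + 1)
    else if k = j0 then L i j0 - C (v i) * X ^ (e + f + 1) + C ε⁻¹ * (L i i0 * X ^ e)
    else L i k with hLε
  set E : Matrix (Fin m) (Fin n) ℂ[X] := Matrix.of fun i j =>
    C (u j) * ((L i j0 - C (v i) * X ^ (e + f + 1)) * X ^ (b + 1))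
    - C (v i) * ((R i0 j - C (u j) * X ^ (b + 1 + e)) * X ^ (f + 1)) with hE
  have key : ∀ ε : ℂ, ε ≠ 0 → ∀ i j,
      (Lε ε * Rε ε) i j = (L * R) i j + C ε * E i j := by
    intro ε hε i j
    have hC : (C ε : ℂ[X]) * C ε⁻¹ = 1 := by
      rw [← C_mul, mul_inv_cancel₀ hε, C_1]
    rw [Matrix.mul_apply, Matrix.mul_apply]
    set A : ℂ[X] := (L i i0 - C (ε * v i) * X ^ (f + 1)) *
        (R i0 j - C (u j) * X ^ (b + 1 + e) - C ε⁻¹ * (R j0 j * X ^ e)) -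
        L i i0 * R i0 j with hA
    set B : ℂ[X] := (L i j0 - C (v i) * X ^ (e + f + 1) + C ε⁻¹ * (L i i0 * X ^ e)) *
        (R j0 j + C (ε * u j) * X ^ (b + 1)) - L i j0 * R j0 j with hB
    have hsum : ∀ k, Lε ε i k * Rε ε k j =
        L i k * R k j + ((if k = i0 then A else 0) + (if k = j0 then B else 0)) := by
      intro k
      by_cases h1 : k = i0
      · subst h1
        simp only [hLε, hRε, Matrix.of_apply, eq_self_iff_true, if_true, if_neg hij, hA, C_mul]
        ring
      · by_cases h2 : k = j0
        · subst h2
          simp only [hLε, hRε, Matrix.of_apply, if_neg h1, eq_self_iff_true, if_true, hB, C_mul]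
          ring
        · simp only [hLε, hRε, Matrix.of_apply, if_neg h1, if_neg h2]
          ring
    rw [Finset.sum_congr rfl fun k _ => hsum k]
    rw [Finset.sum_add_distrib, Finset.sum_add_distrib, Finset.sum_ite_eq', Finset.sum_ite_eq']
    simp only [Finset.mem_univ, if_pos]
    have hfin : A + B = C ε * E i j := by
      simp only [hA, hB, hE, Matrix.of_apply, C_mul]
      linear_combination (C (v i) * R j0 j * X ^ (e + f + 1) +
        C (u j) * L i i0 * X ^ (e + b + 1)) * hC
    rw [hfin]
  have hmem : ∀ ε : ℂ, ε ≠ 0 → ε ≠ bad1 → ε ≠ bad2 →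
      Lε ε * Rε ε ∈ Arho m n d r ρ' := by
    intro ε hε hb1 hb2
    refine ⟨Lε ε, Rε ε, rfl, fun k => ?_⟩
    by_cases h1 : k = i0
    · rw [h1, hρ'i0, show d - (b + e) = f + 1 by omega]
      constructor
      · rw [rowDeg_eq_iff]
        constructor
        · intro j k hk
          simp only [hRε, Matrix.of_apply, eq_self_iff_true, if_true, coeff_sub,
            coeffCXp, coeffCmulXp]
          rcases eq_or_ne k (b + 1 + e) with h4 | h4
          · subst h4
            rw [if_pos rfl, if_pos (show e ≤ b + 1 + e by omega),
              show b + 1 + e - e = b + 1 by omega, hvR2 j (b + 1) (by omega), hu]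
            ring
          · rw [hvR1 j k (by omega), if_neg h4, if_pos (show e ≤ k by omega),
              hvR2 j (k - e) (by omega)]
            ring
        · refine ⟨jstar, ?_⟩
          simp only [hRε, Matrix.of_apply, eq_self_iff_true, if_true, coeff_sub,
            coeffCXp, coeffCmulXp]
          rw [if_neg (show ¬(b + e = b + 1 + e) by omega),
            if_pos (show e ≤ b + e by omega), show b + e - e = b by omega]
          intro hzero
          have h5 : ε⁻¹ * (R j0 jstar).coeff b = (R i0 jstar).coeff (b + e) := by
            linear_combination -hzero
          have h6 : (R i0 jstar).coeff (b + e) / (R j0 jstar).coeff b = ε⁻¹ := by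
            rw [div_eq_iff hjstar]
            linear_combination -h5
          exact hb1 (by rw [hbad1, h6, inv_inv])
      · rw [colDeg_eq_iff]
        constructor
        · intro i k hk
          simp only [hLε, Matrix.of_apply, eq_self_iff_true, if_true, coeff_sub, coeffCXp]
          rw [hvL1 i k (by omega), if_neg (show k ≠ f + 1 by omega)]
          ring
        · refine ⟨iv, ?_⟩
          simp only [hLε, Matrix.of_apply, eq_self_iff_true, if_true, coeff_sub, coeffCXp]
          rw [hvL1 iv (f + 1) (by omega)]
          have hviv : v iv ≠ 0 := by simpa only [hv] using hiv
          simpa using mul_ne_zero hε hviv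
    · by_cases h2 : k = j0
      · rw [h2, hρ'j0, show d - (b + 1) = e + f by omega]
        constructor
        · rw [rowDeg_eq_iff]
          constructor
          · intro j k hk
            simp only [hRε, Matrix.of_apply, if_neg (Ne.symm hij), eq_self_iff_true, if_true,
              coeff_add, coeffCXp]
            rw [hvR2 j k (by omega), if_neg (show k ≠ b + 1 by omega)]
            ring
          · refine ⟨ju, ?_⟩
            simp only [hRε, Matrix.of_apply, if_neg (Ne.symm hij), eq_self_iff_true, if_true,
              coeff_add, coeffCXp]
            rw [hvR2 ju (b + 1) (by omega)]
            have hju' : u ju ≠ 0 := by simpa only [hu] using hju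
            simpa using mul_ne_zero hε hju'
        · rw [colDeg_eq_iff]
          constructor
          · intro i k hk
            simp only [hLε, Matrix.of_apply, if_neg (Ne.symm hij), eq_self_iff_true, if_true,
              coeff_add, coeff_sub, coeffCXp, coeffCmulXp]
            rcases eq_or_ne k (e + f + 1) with h4 | h4
            · subst h4
              rw [if_pos rfl, if_pos (show e ≤ e + f + 1 by omega),
                show e + f + 1 - e = f + 1 by omega, hvL1 i (f + 1) (by omega), hv]
              ring
            · rw [hvL2 i k (by omega), if_neg h4, if_pos (show e ≤ k by omega),
                hvL1 i (k - e) (by omega)]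
              ring
          · refine ⟨istar, ?_⟩
            simp only [hLε, Matrix.of_apply, if_neg (Ne.symm hij), eq_self_iff_true, if_true,
              coeff_add, coeff_sub, coeffCXp, coeffCmulXp]
            rw [if_neg (show ¬(e + f = e + f + 1) by omega),
              if_pos (show e ≤ e + f by omega), show e + f - e = f by omega]
            intro hzero
            have h5 : ε⁻¹ * (L istar i0).coeff f = -((L istar j0).coeff (e + f)) := by
              linear_combination hzero
            have h6 : -((L istar j0).coeff (e + f)) / (L istar i0).coeff f = ε⁻¹ := by
              rw [div_eq_iff histar]
              linear_combination -h5
            exact hb2 (by rw [hbad2, h6, inv_inv])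
      · have hρ'k : ρ' k = ρ k := by
          simp only [hρ'def, Function.update_apply, if_neg h1, if_neg h2]
        rw [hρ'k]
        constructor
        · have hr : rowDeg (Rε ε) k = rowDeg R k := by
            apply Finset.sup_congr rfl
            intro j _
            simp [hRε, h1, h2]
          rw [hr, (hLR k).1]
        · have hc : colDeg (Lε ε) k = colDeg L k := by
            apply Finset.sup_congr rfl
            intro i _
            simp [hLε, h1, h2]
          rw [hc, (hLR k).2]
  refine ⟨hdegP, ?_⟩
  have hchoice : ∀ N : ℕ, ∃ ε : ℂ, (ε ≠ 0 ∧ ε ≠ bad1 ∧ ε ≠ bad2) ∧ ‖ε‖ ≤ 1 / ((N : ℝ) + 1) := by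
    intro N
    set c : ℕ → ℂ := fun t => (((N + 1 + t : ℕ) : ℂ))⁻¹ with hc
    have hcne : ∀ t, c t ≠ 0 := by
      intro t
      simp only [hc]
      exact inv_ne_zero (Nat.cast_ne_zero.mpr (by omega))
    have hcinj : ∀ s t : ℕ, c s = c t → s = t := by
      intro s t hst
      simp only [hc] at hst
      have h' := inv_inj.mp hst
      have h'' := Nat.cast_inj (R := ℂ) |>.mp h'
      omega
    have hcnorm : ∀ t, ‖c t‖ ≤ 1 / ((N : ℝ) + 1) := by
      intro t
      simp only [hc, norm_inv, Complex.norm_natCast, one_div]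
      apply inv_anti₀
      · positivity
      · push_cast; linarith
    by_cases h01 : c 0 = bad1
    · by_cases h12 : c 1 = bad2
      · refine ⟨c 2, ⟨hcne 2, ?_, ?_⟩, hcnorm 2⟩
        · rw [← h01]; intro h; exact (by omega : (2 : ℕ) ≠ 0) (hcinj 2 0 h)
        · rw [← h12]; intro h; exact (by omega : (2 : ℕ) ≠ 1) (hcinj 2 1 h)
      · refine ⟨c 1, ⟨hcne 1, ?_, h12⟩, hcnorm 1⟩
        rw [← h01]; intro h; exact (by omega : (1 : ℕ) ≠ 0) (hcinj 1 0 h)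
    · by_cases h02 : c 0 = bad2
      · by_cases h11 : c 1 = bad1
        · refine ⟨c 2, ⟨hcne 2, ?_, ?_⟩, hcnorm 2⟩
          · rw [← h11]; intro h; exact (by omega : (2 : ℕ) ≠ 1) (hcinj 2 1 h)
          · rw [← h02]; intro h; exact (by omega : (2 : ℕ) ≠ 0) (hcinj 2 0 h)
        · refine ⟨c 1, ⟨hcne 1, h11, ?_⟩, hcnorm 1⟩
          rw [← h02]; intro h; exact (by omega : (1 : ℕ) ≠ 0) (hcinj 1 0 h)
      · exact ⟨c 0, ⟨hcne 0, h01, h02⟩, hcnorm 0⟩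
  choose ε hεgood hεnorm using hchoice
  have hε0 : Filter.Tendsto ε Filter.atTop (nhds 0) :=
    squeeze_zero_norm hεnorm tendsto_one_div_add_atTop_nhds_zero_nat
  apply mem_closure_of_tendsto (b := Filter.atTop)
    (f := fun N => coeffs d (Lε (ε N) * Rε (ε N)))
  · rw [tendsto_pi_nhds]
    intro k
    rw [tendsto_pi_nhds]
    intro i
    rw [tendsto_pi_nhds]
    intro j
    have hcoeff : ∀ N, coeffs d (Lε (ε N) * Rε (ε N)) k i j =
        coeffs d (L * R) k i j + ε N * (E i j).coeff k := by
      intro N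
      show ((Lε (ε N) * Rε (ε N)) i j).coeff (k : ℕ) =
        ((L * R) i j).coeff (k : ℕ) + ε N * (E i j).coeff (k : ℕ)
      rw [key (ε N) (hεgood N).1 i j, coeff_add, coeff_C_mul]
    simp only [hcoeff]
    simpa using (hε0.mul_const ((E i j).coeff (k : ℕ))).const_add (coeffs d (L * R) k i j)
  · exact Filter.Eventually.of_forall fun N => Set.mem_image_of_mem _
      (hmem (ε N) (hεgood N).1 (hεgood N).2.1 (hεgood N).2.2)

/-- Every set A^{m×n}_{d,r,a}(ρ₁,…,ρ_r) is contained in the closure of the homogeneous one,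
where the row degrees of R are d_R + 1 = ⌊a/r⌋ + 1 (repeated a mod r times) and
d_R = ⌊a/r⌋ (repeated r − (a mod r) times). -/
theorem Arho_subset_closure_homogeneous
    {m n r d a : ℕ}
    (hm : 2 ≤ m) (hn : 2 ≤ n) (hd : 1 ≤ d) (hr0 : 0 < r) (hrm : r < m) (hrn : r < n)
    (ha : a ≤ r * d)
    (ρ : Fin r → ℕ) (hρd : ∀ i, ρ i ≤ d) (hρa : ∑ i, ρ i = a) :
    Arho m n d r ρ ⊆
      polyClosure d (Arho m n d r
        (fun i : Fin r => if (i : ℕ) < a % r then a / r + 1 else a / r)) := by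
  set q := a / r with hq
  set s := a % r with hs
  have hsr : s < r := Nat.mod_lt a hr0
  have hmod : r * q + s = a := by rw [hq, hs]; exact Nat.div_add_mod a r
  clear_value q s
  set τ : Fin r → ℕ := fun i => if (i : ℕ) < s then q + 1 else q with hτ
  have hτd : ∀ i, τ i ≤ d := by
    intro i
    simp only [hτ]
    split
    · rename_i h
      by_contra hcon
      have h3 : r * d ≤ r * q := Nat.mul_le_mul_left r (by omega)
      omega
    · by_contra hcon
      have h3 : r * d + r ≤ r * q := by
        calc r * d + r = r * (d + 1) := by ring
          _ ≤ r * q := Nat.mul_le_mul_left r (by omega)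
      omega
  have hτsum : ∑ i, τ i = a := by
    simp only [hτ]
    rw [Fin.sum_univ_eq_sum_range (fun t => if t < s then q + 1 else q) r]
    rw [Finset.range_eq_Ico, ← Finset.sum_Ico_consecutive _ (Nat.zero_le s) hsr.le]
    have h2 : ∑ i ∈ Finset.Ico 0 s, (if i < s then q + 1 else q) = s * (q + 1) := by
      rw [Finset.sum_congr rfl fun i hi => if_pos (Finset.mem_Ico.mp hi).2]
      rw [Finset.sum_const, Nat.card_Ico, smul_eq_mul, Nat.sub_zero]
    have h3 : ∑ i ∈ Finset.Ico s r, (if i < s then q + 1 else q) = (r - s) * q := by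
      rw [Finset.sum_congr rfl fun i hi =>
        if_neg (by have := (Finset.mem_Ico.mp hi).1; omega)]
      rw [Finset.sum_const, Nat.card_Ico, smul_eq_mul]
    rw [h2, h3]
    have h4 : (r - s) * q + s * q = r * q := by
      rw [← Nat.add_mul, Nat.sub_add_cancel hsr.le]
    have h5 : s * (q + 1) = s * q + s := by ring
    omega
  suffices H : ∀ M (σ : Fin r → ℕ), (∀ i, σ i ≤ d) → (∑ i, σ i = a) →
      (∑ i, ((σ i - τ i) + (τ i - σ i))) = M →
      Arho m n d r σ ⊆ polyClosure d (Arho m n d r τ) by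
    exact H _ ρ hρd hρa rfl
  intro M
  induction M using Nat.strong_induction_on with
  | _ M IH =>
    intro σ hσd hσa hM
    by_cases hEq : σ = τ
    · rw [hEq]
      exact Arho_subset_polyClosure_self hτd
    · have hex1 : ∃ i, τ i < σ i := by
        by_contra hcon
        push_neg at hcon
        apply hEq
        funext i
        by_contra hne
        have hlti : σ i < τ i := lt_of_le_of_ne (hcon i) hne
        have hsum : ∑ j, σ j < ∑ j, τ j :=
          Finset.sum_lt_sum (fun j _ => hcon j) ⟨i, Finset.mem_univ i, hlti⟩
        omega
      have hex2 : ∃ j, σ j < τ j := by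
        by_contra hcon
        push_neg at hcon
        obtain ⟨i, hi⟩ := hex1
        have hsum : ∑ j, τ j < ∑ j, σ j :=
          Finset.sum_lt_sum (fun j _ => hcon j) ⟨i, Finset.mem_univ i, hi⟩
        omega
      obtain ⟨i0, hi0⟩ := hex1
      obtain ⟨j0, hj0⟩ := hex2
      have hij : i0 ≠ j0 := by
        intro h
        rw [h] at hi0
        omega
      have hlt : σ j0 < σ i0 := by
        have h1 : q ≤ τ i0 := by simp only [hτ]; split <;> omega
        have h2 : τ j0 ≤ q + 1 := by simp only [hτ]; split <;> omega
        omega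
      set σ' := Function.update (Function.update σ i0 (σ i0 - 1)) j0 (σ j0 + 1) with hσ'
      have hstep := swap_step (m := m) (n := n) σ hσd i0 j0 hij hlt
      have hσ'd : ∀ i, σ' i ≤ d := by
        intro i
        simp only [hσ', Function.update_apply]
        by_cases hij0 : i = j0
        · rw [if_pos hij0]
          have := hτd j0
          omega
        · rw [if_neg hij0]
          by_cases hii0 : i = i0
          · rw [if_pos hii0]
            have := hσd i0
            omega
          · rw [if_neg hii0]
            exact hσd i
      have hs1 : ∑ i, (σ' i + (if i = i0 then 1 else 0)) =
          ∑ i, (σ i + (if i = j0 then 1 else 0)) := by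
        apply Finset.sum_congr rfl
        intro i _
        simp only [hσ', Function.update_apply]
        by_cases hij0 : i = j0
        · subst hij0
          simp only [eq_self_iff_true, if_true, if_neg (Ne.symm hij)]
          try omega
        · by_cases hii0 : i = i0
          · subst hii0
            simp only [eq_self_iff_true, if_true, if_neg hij0]
            try omega
          · simp only [if_neg hij0, if_neg hii0]
      have hσ'a : ∑ i, σ' i = a := by
        have h := hs1
        rw [Finset.sum_add_distrib, Finset.sum_add_distrib,
          Finset.sum_ite_eq', Finset.sum_ite_eq'] at h
        simp only [Finset.mem_univ, if_pos] at h
        omega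
      have hs2 : ∑ i, (((σ' i - τ i) + (τ i - σ' i)) +
            ((if i = i0 then 1 else 0) + (if i = j0 then 1 else 0))) =
          ∑ i, ((σ i - τ i) + (τ i - σ i)) := by
        apply Finset.sum_congr rfl
        intro i _
        simp only [hσ', Function.update_apply]
        by_cases hij0 : i = j0
        · subst hij0
          simp only [eq_self_iff_true, if_true, if_neg (Ne.symm hij)]
          try omega
        · by_cases hii0 : i = i0
          · subst hii0
            simp only [eq_self_iff_true, if_true, if_neg hij0]
            try omega
          · simp only [if_neg hij0, if_neg hii0]
            try omega
      have hM' : (∑ i, ((σ' i - τ i) + (τ i - σ' i))) + 2 = M := by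
        have h := hs2
        rw [Finset.sum_add_distrib, Finset.sum_add_distrib (f := fun i => if i = i0 then 1 else 0),
          Finset.sum_ite_eq', Finset.sum_ite_eq'] at h
        simp only [Finset.mem_univ, if_pos] at h
        omega
      exact Set.Subset.trans hstep
        (polyClosure_trans (IH _ (by omega) σ' hσ'd hσ'a rfl))
end
end

section
/- Let m, n, r, d be integers with m, n ≥ 2, d ≥ 1 and 0 < r < min{m,n}, let a be an integer with 0 ≤ a ≤ rd, and define α := ⌊a/(n−r)⌋, s := a mod (n−r), β := ⌊(rd−a)/(m−r)⌋, t := (rd−a) mod (m−r). Then for P ∈ ℂ[λ]^{m×n}_d the following two conditions are equivalent (the first condition says exactly that P has the generic complete eigenstructure K_a, i.e., P ∈ orb(K_a)): (1) P has normal rank r, degree exactly d, no finite eigenvalues (rank P(λ₀) = r for all λ₀ ∈ ℂ), no eigenvalue at infinity with respect to grade d (the matrix of coefficients of λ^d of the entries of P has rank r), N_ℓ(P) has minimal indices β+1 (t times) and β (m−r−t times), and N_r(P) has minimal indices α+1 (s times) and α (n−r−s times); (2) P = L R, where L ∈ ℂ[λ]^{m×r} has columns forming a minimal basis, R ∈ ℂ[λ]^{r×n}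 has rows forming a minimal basis, N_ℓ(L) has minimal indices β+1 (t times) and β (m−r−t times), N_r(R) has minimal indices α+1 (s times) and α (n−r−s times), and deg(L_{*i}) + deg(R_{i*}) = d for i = 1,…,r. -/
open Polynomial Matrix

noncomputable section

variable {F : Type*} [Field F]

/-- Minimal row basis over ℂ (Forney's characterization, with evaluation points in ℂ,
which is algebraically closed). -/
def IsMinimalRowBasisC {p n : ℕ} (M : Matrix (Fin p) (Fin n) ℂ[X]) : Prop :=
  (∀ x : ℂ, (M.map (fun q => q.eval x)).rank = p) ∧ RowReduced M

/-- Minimal column basis over ℂ. -/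
def IsMinimalColBasisC {m p : ℕ} (M : Matrix (Fin m) (Fin p) ℂ[X]) : Prop :=
  (∀ x : ℂ, (M.map (fun q => q.eval x)).rank = p) ∧ ColReduced M

/-- A rational subspace V has the multiset ms as its minimal indices: it admits a minimal
basis (arranged as the rows of a polynomial matrix) whose multiset of row degrees is ms. -/
def HasMinIndices {n : ℕ} (V : Submodule (RatFunc ℂ) (Fin n → RatFunc ℂ))
    (ms : Multiset ℕ) : Prop :=
  ∃ (p : ℕ) (M : Matrix (Fin p) (Fin n) ℂ[X]), IsMinimalRowBasisC M ∧ rowSpace M = V ∧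
    (Finset.univ.val.map fun i : Fin p => rowDegNat M i) = ms

/-!
Forney's reduction turns any polynomial basis of the row space of `P` into a minimal basis `R`.
As `R(x)` has full row rank at every `x`, its maximal minors have no common root and so generate
the unit ideal; this gives a polynomial right inverse of `R`, whence `P = L R` with `L`
polynomial. The predictable degree property of the row reduced `R` bounds
`deg L_{ki} + deg R_{i*} ≤ d`, and comparing coefficients of `λ ^ d` gives `P_d = C R_hr`,
where `C` collects the coefficients of `L` in degree `d - deg R_{i*}`. Since `rank P_d = r`, no
column of `C` vanishes: the column degrees of `L` are exactly `d - deg R_{i*}` and `C = L_hc`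
has full rank. Conversely the same identity reads `P_d = L_hc R_hr`. In both directions the
minimal indices transfer because `N_ℓ(L R) = N_ℓ(L)` and `N_r(L R) = N_r(R)` when `L` and `R`
have full normal rank.
-/

namespace Matrix

variable {K : Type*} [Field K] {l m n : Type*} [Fintype l] [Fintype m] [Fintype n]

theorem linearIndependent_row_of_rank_eq {M : Matrix m n K} (h : M.rank = Fintype.card m) :
    LinearIndependent K M.row :=
  linearIndependent_iff_card_eq_finrank_span.mpr (by rw [← h, rank_eq_finrank_span_row]; rfl)

theorem linearIndependent_col_of_rank_eq {M : Matrix m n K} (h : M.rank = Fintype.card n) :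
    LinearIndependent K M.col := by
  rw [← row_transpose]
  exact linearIndependent_row_of_rank_eq (by rwa [rank_transpose])

theorem eq_zero_of_vecMul_eq_zero_of_rank_eq {M : Matrix m n K} (h : M.rank = Fintype.card m)
    {c : m → K} (hc : c ᵥ* M = 0) : c = 0 :=
  vecMul_injective_iff.mpr (linearIndependent_row_of_rank_eq h) (hc.trans (zero_vecMul M).symm)

theorem eq_zero_of_mulVec_eq_zero_of_rank_eq {M : Matrix m n K} (h : M.rank = Fintype.card n)
    {v : n → K} (hv : M *ᵥ v = 0) : v = 0 :=
  mulVec_injective_iff.mpr (linearIndependent_col_of_rank_eq h) (hv.trans (mulVec_zero M).symm)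

theorem exists_vecMul_eq_zero_of_rank_lt {M : Matrix m n K} (h : M.rank < Fintype.card m) :
    ∃ c ≠ 0, c ᵥ* M = 0 := by
  by_contra! hc
  refine h.ne (LinearIndependent.rank_matrix (vecMul_injective_iff.mp fun c c' hcc => ?_))
  by_contra hne
  exact hc _ (sub_ne_zero.mpr hne) (by rw [sub_vecMul]; exact sub_eq_zero.mpr hcc)

theorem rank_mul_eq_right_of_rank_eq {A : Matrix l m K} (hA : A.rank = Fintype.card m)
    (B : Matrix m n K) : (A * B).rank = B.rank := by
  rw [rank, rank, mulVecLin_mul, LinearMap.range_comp]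
  exact (Submodule.equivMapOfInjective _
    (mulVec_injective_iff.mpr (linearIndependent_col_of_rank_eq hA)) _).symm.finrank_eq

theorem exists_det_submatrix_ne_zero [DecidableEq m] {M : Matrix m n K}
    (h : M.rank = Fintype.card m) : ∃ g : m → n, (M.submatrix id g).det ≠ 0 := by
  obtain ⟨κ, a, ha, hspan, hli⟩ := exists_linearIndependent' K M.col
  have : Finite κ := Finite.of_injective a ha
  have := Fintype.ofFinite κ
  have hcard : Fintype.card m = Fintype.card κ := by
    rw [← h, rank_eq_finrank_span_cols, ← hspan, finrank_span_eq_card hli]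
  let e : m ≃ κ := Fintype.equivOfCardEq hcard
  refine ⟨a ∘ e, (isUnit_iff_isUnit_det _).mp ?_ |>.ne_zero⟩
  exact linearIndependent_cols_iff_isUnit.mp (hli.comp e e.injective)

end Matrix

section PolynomialMatrix

variable {l m n : ℕ}

theorem toRat_mul (A : Matrix (Fin l) (Fin m) F[X]) (B : Matrix (Fin m) (Fin n) F[X]) :
    toRat (A * B) = toRat A * toRat B :=
  Matrix.map_mul

theorem toRat_one : toRat (1 : Matrix (Fin m) (Fin m) F[X]) = 1 :=
  Matrix.map_one _ (map_zero _) (map_one _)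

theorem toRat_injective : Function.Injective (toRat : Matrix (Fin m) (Fin n) F[X] → _) :=
  Matrix.map_injective (RatFunc.algebraMap_injective F)

theorem map_eval_mul (A : Matrix (Fin l) (Fin m) F[X]) (B : Matrix (Fin m) (Fin n) F[X]) (x : F) :
    (A * B).map (eval x) = A.map (eval x) * B.map (eval x) :=
  Matrix.map_mul (f := evalRingHom x)

/-- A nonzero maximal minor of `M(x)` lifts to a nonzero maximal minor of `M`. -/
theorem normalRank_eq_height_of_rank_map_eval {M : Matrix (Fin m) (Fin n) F[X]} {x : F}
    (h : (M.map (eval x)).rank = m) : normalRank M = m := by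
  obtain ⟨g, hg⟩ := exists_det_submatrix_ne_zero (h.trans (Fintype.card_fin m).symm)
  have hdet : ((toRat M).submatrix id g).det ≠ 0 := by
    rw [toRat, submatrix_map, ← RingHom.mapMatrix_apply, ← RingHom.map_det,
      map_ne_zero_iff _ (RatFunc.algebraMap_injective F)]
    rintro h0
    apply hg
    rw [submatrix_map, ← coe_evalRingHom, ← RingHom.mapMatrix_apply, ← RingHom.map_det, h0,
      map_zero]
  refine le_antisymm (rank_le_height _) ?_
  calc m = ((toRat M).submatrix id g).rank := by rw [rank_of_det_ne_zero hdet, Fintype.card_fin]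
    _ ≤ (toRat M).rank := rank_submatrix_le _ _ _

theorem normalRank_eq_width_of_rank_map_eval {M : Matrix (Fin m) (Fin n) F[X]} {x : F}
    (h : (M.map (eval x)).rank = n) : normalRank M = n := by
  rw [normalRank, ← rank_transpose]
  exact normalRank_eq_height_of_rank_map_eval (M := Mᵀ) (x := x)
    (by rwa [transpose_map, rank_transpose])

end PolynomialMatrix

def coeffMatrix {m n : ℕ} (P : Matrix (Fin m) (Fin n) F[X]) (d : ℕ) :
    Matrix (Fin m) (Fin n) F :=
  Matrix.of fun i j => (P i j).coeff d

section Degrees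

variable {m n r : ℕ}

theorem natDegree_le_rowDegNat (M : Matrix (Fin m) (Fin n) F[X]) (i : Fin m) (j : Fin n) :
    (M i j).natDegree ≤ rowDegNat M i :=
  Finset.le_sup (f := fun j => (M i j).natDegree) (Finset.mem_univ j)

theorem natDegree_le_colDegNat (M : Matrix (Fin m) (Fin n) F[X]) (i : Fin m) (j : Fin n) :
    (M i j).natDegree ≤ colDegNat M j :=
  Finset.le_sup (f := fun i => (M i j).natDegree) (Finset.mem_univ i)

theorem Polynomial.sup_degree_eq_coe_sup_natDegree {ι : Type*} {s : Finset ι} {f : ι → F[X]}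
    (h : ∃ i ∈ s, f i ≠ 0) :
    s.sup (fun i => (f i).degree) = ↑(s.sup fun i => (f i).natDegree) := by
  obtain ⟨i, hi, hfi⟩ := h
  refine le_antisymm (Finset.sup_le fun k hk => degree_le_natDegree.trans
    (WithBot.coe_le_coe.mpr (Finset.le_sup (f := fun i => (f i).natDegree) hk))) ?_
  obtain ⟨k, hk, hsup⟩ := Finset.exists_mem_eq_sup s ⟨i, hi⟩ fun i => (f i).natDegree
  rw [hsup]
  by_cases hfk : f k = 0
  · rw [hfk, natDegree_zero]
    exact (zero_le_degree_iff.mpr hfi).trans (Finset.le_sup (f := fun i => (f i).degree) hi)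
  · rw [← degree_eq_natDegree hfk]
    exact Finset.le_sup (f := fun i => (f i).degree) hk

theorem Polynomial.sup_degree_eq_bot_iff {ι : Type*} {s : Finset ι} {f : ι → F[X]} :
    s.sup (fun i => (f i).degree) = ⊥ ↔ ∀ i ∈ s, f i = 0 := by
  simp [Finset.sup_eq_bot_iff]

theorem colDeg_add_rowDeg_eq_iff {L : Matrix (Fin m) (Fin r) F[X]}
    {R : Matrix (Fin r) (Fin n) F[X]} {i : Fin r} {d : ℕ} :
    colDeg L i + rowDeg R i = d ↔
      (∃ k, L k i ≠ 0) ∧ (∃ j, R i j ≠ 0) ∧ colDegNat L i + rowDegNat R i = d := by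
  by_cases hL : ∃ k, L k i ≠ 0
  · by_cases hR : ∃ j, R i j ≠ 0
    · rw [colDeg, rowDeg, sup_degree_eq_coe_sup_natDegree (by simpa using hL),
        sup_degree_eq_coe_sup_natDegree (by simpa using hR)]
      exact ⟨fun h => ⟨hL, hR, by exact_mod_cast h⟩, fun h => by exact_mod_cast h.2.2⟩
    · have : rowDeg R i = ⊥ := sup_degree_eq_bot_iff.mpr (by simpa using hR)
      simp [this, hR]
  · have : colDeg L i = ⊥ := sup_degree_eq_bot_iff.mpr (by simpa using hL)
    simp [this, hL]

theorem matDeg_eq_of_coeffMatrix_ne_zero {P : Matrix (Fin m) (Fin n) F[X]} {d : ℕ}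
    (hdeg : ∀ i j, (P i j).degree ≤ d) (h : coeffMatrix P d ≠ 0) : matDeg P = d := by
  obtain ⟨i, j, hij⟩ : ∃ i j, (P i j).coeff d ≠ 0 := by
    by_contra! h0
    exact h (Matrix.ext h0)
  refine le_antisymm (Finset.sup_le fun i _ => Finset.sup_le fun j _ => hdeg i j) ?_
  calc (d : WithBot ℕ) ≤ (P i j).degree := le_degree_of_ne_zero hij
    _ ≤ matDeg P := (Finset.le_sup (f := fun j => (P i j).degree) (Finset.mem_univ j)).trans
        (Finset.le_sup (f := fun i => Finset.univ.sup fun j => (P i j).degree) (Finset.mem_univ i))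

end Degrees

theorem exists_ne_zero_forall_ne_zero_le {ι α : Type*} [Fintype ι] [Zero α] {c : ι → α}
    (hc : c ≠ 0) (f : ι → ℕ) : ∃ i, c i ≠ 0 ∧ ∀ k, c k ≠ 0 → f k ≤ f i := by
  classical
  obtain ⟨i₀, hi₀⟩ := Function.ne_iff.mp hc
  obtain ⟨i, hi, hmax⟩ := Finset.exists_max_image (Finset.univ.filter (c · ≠ 0)) f
    ⟨i₀, by simpa using hi₀⟩
  simp only [Finset.mem_filter, Finset.mem_univ, true_and] at hi hmax
  exact ⟨i, hi, hmax⟩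

section PredictableDegree

variable {m n r : ℕ} {R : Matrix (Fin r) (Fin n) F[X]} {y : Fin r → F[X]} {D : ℕ}

theorem natDegree_vecMul_le (hy : ∀ i, y i ≠ 0 → (y i).natDegree + rowDegNat R i ≤ D)
    (j : Fin n) : ((y ᵥ* R) j).natDegree ≤ D := by
  simp only [vecMul, dotProduct]
  refine natDegree_sum_le_of_forall_le _ _ fun i _ => ?_
  by_cases hyi : y i = 0
  · simp [hyi]
  · exact natDegree_mul_le.trans
      ((Nat.add_le_add_left (natDegree_le_rowDegNat R i j) _).trans (hy i hyi))

theorem coeff_vecMul_eq_vecMul_hrMatrix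
    (hy : ∀ i, y i ≠ 0 → (y i).natDegree + rowDegNat R i ≤ D) (j : Fin n) :
    ((y ᵥ* R) j).coeff D = ((fun i => (y i).coeff (D - rowDegNat R i)) ᵥ* hrMatrix R) j := by
  simp only [vecMul, dotProduct, finsetSum_coeff]
  refine Finset.sum_congr rfl fun i _ => ?_
  by_cases hyi : y i = 0
  · simp [hyi]
  · have hD := hy i hyi
    have h := coeff_mul_add_eq_of_natDegree_le (df := D - rowDegNat R i)
      (Nat.le_sub_of_add_le hD) (natDegree_le_rowDegNat R i j)
    rwa [Nat.sub_add_cancel (le_of_add_le_right hD)] at h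

/-- The predictable degree property of a row reduced matrix. -/
theorem natDegree_add_rowDegNat_le (hR : RowReduced R) (h : ∀ j, ((y ᵥ* R) j).natDegree ≤ D)
    {i : Fin r} (hi : y i ≠ 0) : (y i).natDegree + rowDegNat R i ≤ D := by
  obtain ⟨i₀, hi₀, hmax⟩ :=
    exists_ne_zero_forall_ne_zero_le (Function.ne_iff.mpr ⟨i, hi⟩) fun i =>
      (y i).natDegree + rowDegNat R i
  refine (hmax i hi).trans (not_lt.mp fun hlt => hi₀ ?_)
  set D' := (y i₀).natDegree + rowDegNat R i₀
  -- if `D < D'`, the top coefficients of `y` form a left kernel vector of `hrMatrix R`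
  -- whose `i₀`-th entry is the leading coefficient of `y i₀`
  have hc : (fun i => (y i).coeff (D' - rowDegNat R i)) ᵥ* hrMatrix R = 0 := by
    funext j
    rw [← coeff_vecMul_eq_vecMul_hrMatrix hmax]
    exact coeff_eq_zero_of_natDegree_lt ((h j).trans_lt hlt)
  have := congrFun
    (eq_zero_of_vecMul_eq_zero_of_rank_eq (hR.trans (Fintype.card_fin r).symm) hc) i₀
  rwa [Pi.zero_apply, Nat.add_sub_cancel, coeff_natDegree, leadingCoeff_eq_zero] at this

theorem coeffMatrix_mul_eq {L : Matrix (Fin m) (Fin r) F[X]}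
    (h : ∀ k i, L k i ≠ 0 → (L k i).natDegree + rowDegNat R i ≤ D) :
    coeffMatrix (L * R) D = (Matrix.of fun k i => (L k i).coeff (D - rowDegNat R i)) * hrMatrix R :=
  Matrix.ext fun k j => coeff_vecMul_eq_vecMul_hrMatrix (h k) j

end PredictableDegree

section Subspaces

variable {l m n r : ℕ}

theorem rowSpace_eq_span (M : Matrix (Fin m) (Fin n) F[X]) :
    rowSpace M = Submodule.span (RatFunc F) (Set.range (toRat M).row) := by
  rw [rowSpace, range_mulVecLin, col_transpose]

theorem finrank_rowSpace (M : Matrix (Fin m) (Fin n) F[X]) :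
    Module.finrank (RatFunc F) (rowSpace M) = normalRank M := by
  rw [rowSpace_eq_span, normalRank, rank_eq_finrank_span_row]

theorem rowSpace_eq_of_toRat_eq_mul {A B : Matrix (Fin m) (Fin n) F[X]}
    {E : Matrix (Fin m) (Fin m) (RatFunc F)} (hE : IsUnit E) (h : toRat A = E * toRat B) :
    rowSpace A = rowSpace B := by
  rw [rowSpace, rowSpace, h, transpose_mul, mulVecLin_mul,
    LinearMap.range_comp_of_range_eq_top _ (LinearMap.range_eq_top.mpr
      (mulVec_surjective_iff_isUnit.mpr ((isUnit_transpose _).mpr hE)))]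

theorem exists_mul_eq_of_rowSpace_le {A : Matrix (Fin l) (Fin n) F[X]}
    {B : Matrix (Fin m) (Fin n) F[X]} (h : rowSpace A ≤ rowSpace B) :
    ∃ Y : Matrix (Fin l) (Fin m) (RatFunc F), toRat A = Y * toRat B := by
  have hrow k : ∃ y, y ᵥ* toRat B = toRat A k := by
    obtain ⟨y, hy⟩ := h (by rw [rowSpace_eq_span]; exact Submodule.subset_span ⟨k, rfl⟩)
    exact ⟨y, by rwa [mulVecLin_apply, mulVec_transpose] at hy⟩
  choose Y hY using hrow
  exact ⟨Matrix.of Y, Matrix.ext fun k j => (congrFun (hY k) j).symm⟩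

theorem leftNull_mul_of_normalRank_eq {L : Matrix (Fin m) (Fin r) F[X]}
    {R : Matrix (Fin r) (Fin n) F[X]} (hR : normalRank R = r) :
    leftNull (L * R) = leftNull L := by
  ext y
  simp only [leftNull, LinearMap.mem_ker, mulVecLin_apply, mulVec_transpose, toRat_mul,
    ← vecMul_vecMul]
  refine ⟨eq_zero_of_vecMul_eq_zero_of_rank_eq (by simpa [normalRank] using hR), fun h => ?_⟩
  rw [h, zero_vecMul]

theorem rightNull_mul_of_normalRank_eq {L : Matrix (Fin m) (Fin r) F[X]}
    {R : Matrix (Fin r) (Fin n) F[X]} (hL : normalRank L = r) :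
    rightNull (L * R) = rightNull R := by
  ext x
  simp only [rightNull, LinearMap.mem_ker, mulVecLin_apply, toRat_mul, ← mulVec_mulVec]
  refine ⟨eq_zero_of_mulVec_eq_zero_of_rank_eq (by simpa [normalRank] using hL), fun h => ?_⟩
  rw [h, mulVec_zero]

end Subspaces

section RightInverse

theorem Matrix.exists_mul_eq_one_of_span_det_submatrix_eq_top {R : Type*} [CommRing R]
    {m n : Type*} [Fintype m] [DecidableEq m] [Fintype n] [DecidableEq n] {A : Matrix m n R}
    (h : Ideal.span (Set.range fun g : m → n => (A.submatrix id g).det) = ⊤) :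
    ∃ B : Matrix n m R, A * B = 1 := by
  obtain ⟨c, hc⟩ :=
    Ideal.mem_span_range_iff_exists_fun.mp (h ▸ Submodule.mem_top : (1 : R) ∈ _)
  refine ⟨∑ g, c g • ((1 : Matrix n n R).submatrix id g * (A.submatrix id g).adjugate), ?_⟩
  have hsel (g : m → n) : A * (1 : Matrix n n R).submatrix id g = A.submatrix id g := by
    simpa using mul_submatrix_one (Equiv.refl n) g A
  simp only [Matrix.mul_sum, Matrix.mul_smul, ← Matrix.mul_assoc, hsel, mul_adjugate, smul_smul,
    ← Finset.sum_smul, hc, one_smul]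

variable [IsAlgClosed F] {r n : ℕ}

/-- The maximal minors of `A` have no common root, hence generate the unit ideal. -/
theorem span_det_submatrix_eq_top {A : Matrix (Fin r) (Fin n) F[X]}
    (h : ∀ x : F, (A.map (eval x)).rank = r) :
    Ideal.span (Set.range fun g : Fin r → Fin n => (A.submatrix id g).det) = ⊤ := by
  by_contra hne
  obtain ⟨p, hp⟩ := (IsPrincipalIdealRing.principal
    (Ideal.span (Set.range fun g : Fin r → Fin n => (A.submatrix id g).det))).principal
  obtain ⟨x, hx⟩ := IsAlgClosed.exists_root p fun hdeg => hne <| by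
    rw [hp]
    exact Ideal.span_singleton_eq_top.mpr (isUnit_iff_degree_eq_zero.mpr hdeg)
  obtain ⟨g, hg⟩ := exists_det_submatrix_ne_zero ((h x).trans (Fintype.card_fin r).symm)
  have hdvd : p ∣ (A.submatrix id g).det := by
    rw [← Ideal.mem_span_singleton, ← Ideal.submodule_span_eq, ← hp]
    exact Ideal.subset_span ⟨g, rfl⟩
  apply hg
  rw [submatrix_map, ← coe_evalRingHom, ← RingHom.mapMatrix_apply, ← RingHom.map_det,
    coe_evalRingHom, eval_eq_zero_of_dvd_of_eval_eq_zero hdvd hx]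

theorem exists_mul_eq_one_of_rank_map_eval {A : Matrix (Fin r) (Fin n) F[X]}
    (h : ∀ x : F, (A.map (eval x)).rank = r) : ∃ B : Matrix (Fin n) (Fin r) F[X], A * B = 1 :=
  exists_mul_eq_one_of_span_det_submatrix_eq_top (span_det_submatrix_eq_top h)

end RightInverse

section MinimalBasis

variable {m n r : ℕ}

theorem exists_rowSpace_eq_of_normalRank_eq {P : Matrix (Fin m) (Fin n) F[X]}
    (h : normalRank P = r) : ∃ B : Matrix (Fin r) (Fin n) F[X], rowSpace B = rowSpace P := by
  obtain ⟨κ, a, ha, hspan, hli⟩ := exists_linearIndependent' (RatFunc F) (toRat P).row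
  have : Finite κ := Finite.of_injective a ha
  have := Fintype.ofFinite κ
  have hcard : Fintype.card (Fin r) = Fintype.card κ := by
    rw [Fintype.card_fin, ← h, normalRank, rank_eq_finrank_span_row, ← hspan,
      finrank_span_eq_card hli]
  let e : Fin r ≃ κ := Fintype.equivOfCardEq hcard
  refine ⟨P.submatrix (a ∘ e) id, ?_⟩
  rw [rowSpace_eq_span, rowSpace_eq_span, ← hspan]
  exact congrArg _ (e.surjective.range_comp ((toRat P).row ∘ a))

theorem rowSpace_updateRow (B : Matrix (Fin r) (Fin n) F[X]) {i : Fin r}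
    {y : Fin r → RatFunc F} {w : Fin n → F[X]}
    (hw : y ᵥ* toRat B = fun j => algebraMap F[X] (RatFunc F) (w j)) (hyi : y i ≠ 0) :
    rowSpace (B.updateRow i w) = rowSpace B := by
  refine rowSpace_eq_of_toRat_eq_mul (E := (1 : Matrix (Fin r) (Fin r) (RatFunc F)).updateRow i y)
    ?_ ?_
  · have hdet := det_updateRow_sum (1 : Matrix (Fin r) (Fin r) (RatFunc F)) i y
    rw [← vecMul_eq_sum, vecMul_one, det_one, smul_eq_mul, mul_one] at hdet
    rw [isUnit_iff_isUnit_det, hdet]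
    exact hyi.isUnit
  · rw [updateRow_mul, Matrix.one_mul, hw, toRat, map_updateRow]
    rfl

theorem sum_rowDegNat_updateRow_lt (B : Matrix (Fin r) (Fin n) F[X])
    {i : Fin r} {w : Fin n → F[X]} (hw : w ≠ 0) (hdeg : ∀ j, (w j).degree < rowDegNat B i) :
    ∑ k, rowDegNat (B.updateRow i w) k < ∑ k, rowDegNat B k := by
  obtain ⟨j₀, hj₀⟩ := Function.ne_iff.mp hw
  have hlt j : (w j).natDegree < rowDegNat B i := by
    by_cases hwj : w j = 0
    · rw [hwj, natDegree_zero]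
      exact (natDegree_lt_iff_degree_lt hj₀).mpr (hdeg j₀) |>.trans_le' (Nat.zero_le _)
    · exact (natDegree_lt_iff_degree_lt hwj).mpr (hdeg j)
  refine Finset.sum_lt_sum (fun k _ => ?_) ⟨i, Finset.mem_univ i, ?_⟩
  · rcases eq_or_ne k i with rfl | hk
    · exact Finset.sup_le fun j _ => by simpa using (hlt j).le
    · simp [rowDegNat, updateRow_ne hk]
  · have hrow : rowDegNat (B.updateRow i w) i = Finset.univ.sup fun j => (w j).natDegree := by
      simp [rowDegNat]
    rw [hrow, Finset.sup_lt_iff ((Nat.zero_le _).trans_lt (hlt j₀))]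
    exact fun j _ => hlt j

/-- A witness that `B` is not a minimal basis: replacing row `i` by `w` keeps the row space and
lowers the total row degree. -/
def HasLowerRowCombination (B : Matrix (Fin r) (Fin n) F[X]) : Prop :=
  ∃ (i : Fin r) (y : Fin r → RatFunc F) (w : Fin n → F[X]), y i ≠ 0 ∧
    y ᵥ* toRat B = (fun j => algebraMap F[X] (RatFunc F) (w j)) ∧
    ∀ j, (w j).degree < rowDegNat B i

/-- A left kernel vector `c` of `hrMatrix B` gives the combination `∑ c k λ^(δ i - δ k) B k`,
whose coefficients of `λ ^ δ i` cancel. -/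
theorem hasLowerRowCombination_of_vecMul_hrMatrix_eq_zero {B : Matrix (Fin r) (Fin n) F[X]}
    {c : Fin r → F} (hc0 : c ≠ 0) (hc : c ᵥ* hrMatrix B = 0) : HasLowerRowCombination B := by
  set δ := rowDegNat B
  obtain ⟨i, hci, hmax⟩ := exists_ne_zero_forall_ne_zero_le hc0 δ
  set y : Fin r → F[X] := fun k => C (c k) * X ^ (δ i - δ k)
  have hy k (hyk : y k ≠ 0) : (y k).natDegree + δ k ≤ δ i := by
    have hck : c k ≠ 0 := fun h => hyk (by simp [y, h])
    have : (y k).natDegree ≤ δ i - δ k := natDegree_C_mul_X_pow_le (c k) (δ i - δ k)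
    have := hmax k hck
    omega
  refine ⟨i, fun k => algebraMap F[X] (RatFunc F) (y k), fun j => (y ᵥ* B) j, ?_, ?_,
    fun j => ?_⟩
  · simpa [y, map_eq_zero_iff _ (RatFunc.algebraMap_injective F)] using hci
  · funext j
    exact (RingHom.map_vecMul _ B y j).symm
  · rw [degree_lt_iff_coeff_zero]
    intro e he
    rcases he.lt_or_eq with he | rfl
    · exact coeff_eq_zero_of_natDegree_lt ((natDegree_vecMul_le hy j).trans_lt he)
    · have hcoeff : (fun k => (y k).coeff (δ i - δ k)) = c := by funext k; simp [y]
      rw [coeff_vecMul_eq_vecMul_hrMatrix hy j, hcoeff, hc, Pi.zero_apply]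

/-- A left kernel vector `c` of `B(x)` gives a combination `∑ c k B k` divisible by `λ - x`. -/
theorem hasLowerRowCombination_of_vecMul_map_eval_eq_zero {B : Matrix (Fin r) (Fin n) F[X]}
    {c : Fin r → F} {x : F} (hc0 : c ≠ 0) (hc : c ᵥ* B.map (eval x) = 0) :
    HasLowerRowCombination B := by
  set δ := rowDegNat B
  obtain ⟨i, hci, hmax⟩ := exists_ne_zero_forall_ne_zero_le hc0 δ
  set w₀ : Fin n → F[X] := (C ∘ c) ᵥ* B
  have hw₀ j : (w₀ j).natDegree ≤ δ i := natDegree_vecMul_le (fun k hk => by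
    simpa using hmax k fun h => hk (by simp [h])) j
  have hroot j : (X - C x) * (w₀ j /ₘ (X - C x)) = w₀ j := by
    rw [mul_divByMonic_eq_iff_isRoot, IsRoot, ← coe_evalRingHom, RingHom.map_vecMul]
    simpa [Function.comp_def] using congrFun hc j
  set q := algebraMap F[X] (RatFunc F) (X - C x)
  have hq : q ≠ 0 := (map_ne_zero_iff _ (RatFunc.algebraMap_injective F)).mpr (X_sub_C_ne_zero x)
  refine ⟨i, q⁻¹ • fun k => algebraMap F[X] (RatFunc F) (C (c k)),
    fun j => w₀ j /ₘ (X - C x), ?_, ?_, fun j => ?_⟩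
  · simpa [map_eq_zero_iff _ (RatFunc.algebraMap_injective F), hq] using hci
  · funext j
    have hlift : ((fun k => algebraMap F[X] (RatFunc F) (C (c k))) ᵥ* toRat B) j =
        algebraMap F[X] (RatFunc F) (w₀ j) := (RingHom.map_vecMul _ B (C ∘ c) j).symm
    rw [smul_vecMul, Pi.smul_apply, hlift, ← hroot j, map_mul, smul_eq_mul,
      inv_mul_cancel_left₀ hq]
  · by_cases hw : w₀ j = 0
    · simp [hw]
    · exact (degree_divByMonic_lt _ _ hw (by simp)).trans_le
        (degree_le_natDegree.trans (WithBot.coe_le_coe.mpr (hw₀ j)))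

theorem hasLowerRowCombination_of_not_minimal {B : Matrix (Fin r) (Fin n) F[X]}
    (h : ¬((∀ x : F, (B.map (eval x)).rank = r) ∧ RowReduced B)) :
    HasLowerRowCombination B := by
  have hlt {M : Matrix (Fin r) (Fin n) F} (hM : M.rank ≠ r) : M.rank < Fintype.card (Fin r) :=
    (rank_le_card_height M).lt_of_ne (by simpa using hM)
  rw [not_and_or, not_forall] at h
  rcases h with ⟨x, hx⟩ | h
  · obtain ⟨c, hc0, hc⟩ := exists_vecMul_eq_zero_of_rank_lt (hlt hx)
    exact hasLowerRowCombination_of_vecMul_map_eval_eq_zero hc0 hc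
  · obtain ⟨c, hc0, hc⟩ := exists_vecMul_eq_zero_of_rank_lt (hlt h)
    exact hasLowerRowCombination_of_vecMul_hrMatrix_eq_zero hc0 hc

theorem HasLowerRowCombination.exists_rowSpace_eq {B : Matrix (Fin r) (Fin n) F[X]}
    (h : HasLowerRowCombination B) (hB : normalRank B = r) :
    ∃ B' : Matrix (Fin r) (Fin n) F[X],
      rowSpace B' = rowSpace B ∧ ∑ k, rowDegNat B' k < ∑ k, rowDegNat B k := by
  obtain ⟨i, y, w, hyi, hw, hdeg⟩ := h
  have hw0 : w ≠ 0 := by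
    rintro rfl
    refine hyi (congrFun (eq_zero_of_vecMul_eq_zero_of_rank_eq (M := toRat B)
      (by simpa [normalRank] using hB) (hw.trans ?_)) i)
    funext j
    simp
  exact ⟨_, rowSpace_updateRow B hw hyi, sum_rowDegNat_updateRow_lt B hw0 hdeg⟩

/-- Forney's reduction; the total row degree decreases at each step. -/
theorem exists_minimal_row_basis {B : Matrix (Fin r) (Fin n) F[X]} (hB : normalRank B = r) :
    ∃ R : Matrix (Fin r) (Fin n) F[X], (∀ x : F, (R.map (eval x)).rank = r) ∧ RowReduced R ∧
      rowSpace R = rowSpace B := by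
  induction hN : ∑ i, rowDegNat B i using Nat.strong_induction_on generalizing B with
  | _ N ih =>
  by_cases hmin : (∀ x : F, (B.map (eval x)).rank = r) ∧ RowReduced B
  · exact ⟨B, hmin.1, hmin.2, rfl⟩
  obtain ⟨B', hB'B, hlt⟩ := (hasLowerRowCombination_of_not_minimal hmin).exists_rowSpace_eq hB
  obtain ⟨R, hRev, hRred, hRB'⟩ := ih _ (hN ▸ hlt)
    (by rw [← finrank_rowSpace, hB'B, finrank_rowSpace, hB]) rfl
  exact ⟨R, hRev, hRred, hRB'.trans hB'B⟩

end MinimalBasis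

section Factorization

variable {m n r d : ℕ} {L : Matrix (Fin m) (Fin r) F[X]} {R : Matrix (Fin r) (Fin n) F[X]}

theorem exists_ne_zero_of_rowReduced (hR : RowReduced R) (i : Fin r) : ∃ j, R i j ≠ 0 := by
  obtain ⟨j, hj⟩ := Function.ne_iff.mp
    ((linearIndependent_row_of_rank_eq (hR.trans (Fintype.card_fin r).symm)).ne_zero i)
  exact ⟨j, fun h => hj (by simp [hrMatrix, h])⟩

theorem colDegNat_eq_of_coeff_ne_zero {i : Fin r} {e : ℕ}
    (hle : ∀ k, L k i ≠ 0 → (L k i).natDegree ≤ e) {k : Fin m}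
    (hk : (L k i).coeff e ≠ 0) :
    colDegNat L i = e := by
  refine le_antisymm (Finset.sup_le fun k _ => ?_)
    ((le_natDegree_of_ne_zero hk).trans (natDegree_le_colDegNat L k i))
  by_cases hki : L k i = 0
  · simp [hki]
  · exact hle k hki

theorem normalRank_mul_of_normalRank_eq (hL : normalRank L = r) :
    normalRank (L * R) = normalRank R := by
  rw [normalRank, toRat_mul, rank_mul_eq_right_of_rank_eq (by simpa [normalRank] using hL)]
  rfl

theorem rank_map_eval_mul_of_rank_eq {x : F} (hL : (L.map (eval x)).rank = r) :
    ((L * R).map (eval x)).rank = (R.map (eval x)).rank := by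
  rw [map_eval_mul, rank_mul_eq_right_of_rank_eq (by simpa using hL)]

theorem rank_map_eval_of_rank_map_eval_mul {x : F} (h : ((L * R).map (eval x)).rank = r) :
    (L.map (eval x)).rank = r :=
  le_antisymm (rank_le_width _) (h.symm.trans_le (by rw [map_eval_mul]; exact rank_mul_le_left _ _))

theorem rank_coeffMatrix_mul (hL : ColReduced L) (hR : RowReduced R)
    (hdeg : ∀ i, colDegNat L i + rowDegNat R i = d) : (coeffMatrix (L * R) d).rank = r := by
  have hle k i (_ : L k i ≠ 0) : (L k i).natDegree + rowDegNat R i ≤ d :=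
    hdeg i ▸ Nat.add_le_add_right (natDegree_le_colDegNat L k i) _
  rw [coeffMatrix_mul_eq hle, rank_mul_eq_right_of_rank_eq, hR]
  convert hL.trans (Fintype.card_fin r).symm using 3
  ext k i
  simp [hcMatrix, ← hdeg i]

theorem colReduced_and_colDeg_add_rowDeg_eq (hR : RowReduced R)
    (hdeg : ∀ k j, ((L * R) k j).natDegree ≤ d) (hinf : (coeffMatrix (L * R) d).rank = r) :
    ColReduced L ∧ ∀ i, colDeg L i + rowDeg R i = d := by
  have hle k i : L k i ≠ 0 → (L k i).natDegree + rowDegNat R i ≤ d :=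
    natDegree_add_rowDegNat_le hR (hdeg k)
  set C : Matrix (Fin m) (Fin r) F := Matrix.of fun k i => (L k i).coeff (d - rowDegNat R i)
  have hC : C.rank = r := le_antisymm (rank_le_width C) <|
    calc r = (C * hrMatrix R).rank := by rw [← coeffMatrix_mul_eq hle, hinf]
      _ ≤ C.rank := rank_mul_le_left C _
  have hcol i :
      ∃ k, L k i ≠ 0 ∧ colDegNat L i = d - rowDegNat R i ∧ rowDegNat R i ≤ d := by
    obtain ⟨k, hk⟩ := Function.ne_iff.mp
      ((linearIndependent_col_of_rank_eq (hC.trans (Fintype.card_fin r).symm)).ne_zero i)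
    have hLk : L k i ≠ 0 := fun h => hk (by simp [C, h])
    exact ⟨k, hLk, colDegNat_eq_of_coeff_ne_zero (fun k hk => by have := hle k i hk; omega) hk,
      by have := hle k i hLk; omega⟩
  refine ⟨?_, fun i => ?_⟩
  · refine Eq.trans (congrArg Matrix.rank (Matrix.ext fun k i => ?_)) hC
    obtain ⟨-, -, hcd, -⟩ := hcol i
    simp [hcMatrix, C, hcd]
  · obtain ⟨k, hk, hcd, hρ⟩ := hcol i
    exact colDeg_add_rowDeg_eq_iff.mpr
      ⟨⟨k, hk⟩, exists_ne_zero_of_rowReduced hR i, by omega⟩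

theorem exists_eq_mul_of_rowSpace_le [IsAlgClosed F] {P : Matrix (Fin m) (Fin n) F[X]}
    (hR : ∀ x : F, (R.map (eval x)).rank = r) (h : rowSpace P ≤ rowSpace R) :
    ∃ L : Matrix (Fin m) (Fin r) F[X], P = L * R := by
  obtain ⟨Ξ, hΞ⟩ := exists_mul_eq_one_of_rank_map_eval hR
  obtain ⟨Y, hY⟩ := exists_mul_eq_of_rowSpace_le h
  refine ⟨P * Ξ, toRat_injective ?_⟩
  rw [toRat_mul, toRat_mul, hY, Matrix.mul_assoc Y, ← toRat_mul R Ξ, hΞ, toRat_one,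
    Matrix.mul_one]

theorem exists_minimal_factorization [IsAlgClosed F] {P : Matrix (Fin m) (Fin n) F[X]}
    (hdeg : ∀ i j, (P i j).natDegree ≤ d) (hnr : normalRank P = r)
    (hev : ∀ x : F, (P.map (eval x)).rank = r) (hinf : (coeffMatrix P d).rank = r) :
    ∃ (L : Matrix (Fin m) (Fin r) F[X]) (R : Matrix (Fin r) (Fin n) F[X]), P = L * R ∧
      ((∀ x : F, (L.map (eval x)).rank = r) ∧ ColReduced L) ∧
      ((∀ x : F, (R.map (eval x)).rank = r) ∧ RowReduced R) ∧
      ∀ i, colDeg L i + rowDeg R i = d := by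
  obtain ⟨B, hB⟩ := exists_rowSpace_eq_of_normalRank_eq hnr
  obtain ⟨R, hRev, hRred, hRB⟩ :=
    exists_minimal_row_basis (B := B) (by rw [← finrank_rowSpace, hB, finrank_rowSpace, hnr])
  obtain ⟨L, rfl⟩ := exists_eq_mul_of_rowSpace_le hRev (hRB.trans hB).ge
  obtain ⟨hLred, hsum⟩ := colReduced_and_colDeg_add_rowDeg_eq hRred hdeg hinf
  exact ⟨L, R, rfl, ⟨fun x => rank_map_eval_of_rank_map_eval_mul (hev x), hLred⟩,
    ⟨hRev, hRred⟩, hsum⟩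

end Factorization

theorem orbit_Ka_characterization_general
    {m n r d a : ℕ}
    (hr0 : 0 < r)
    (P : Matrix (Fin m) (Fin n) ℂ[X])
    (hPdeg : ∀ i j, (P i j).degree ≤ (d : WithBot ℕ)) :
    (normalRank P = r ∧ matDeg P = (d : WithBot ℕ) ∧
      (∀ x : ℂ, (P.map (fun q => q.eval x)).rank = r) ∧
      (Matrix.of (fun (i : Fin m) (j : Fin n) => (P i j).coeff d) :
        Matrix (Fin m) (Fin n) ℂ).rank = r ∧
      HasMinIndices (leftNull P)
        (Multiset.replicate ((r * d - a) % (m - r)) ((r * d - a) / (m - r) + 1) +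
         Multiset.replicate ((m - r) - (r * d - a) % (m - r)) ((r * d - a) / (m - r))) ∧
      HasMinIndices (rightNull P)
        (Multiset.replicate (a % (n - r)) (a / (n - r) + 1) +
         Multiset.replicate ((n - r) - a % (n - r)) (a / (n - r))))
    ↔
    (∃ (L : Matrix (Fin m) (Fin r) ℂ[X]) (R : Matrix (Fin r) (Fin n) ℂ[X]),
      P = L * R ∧ IsMinimalColBasisC L ∧ IsMinimalRowBasisC R ∧
      HasMinIndices (leftNull L)
        (Multiset.replicate ((r * d - a) % (m - r)) ((r * d - a) / (m - r) + 1) +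
         Multiset.replicate ((m - r) - (r * d - a) % (m - r)) ((r * d - a) / (m - r))) ∧
      HasMinIndices (rightNull R)
        (Multiset.replicate (a % (n - r)) (a / (n - r) + 1) +
         Multiset.replicate ((n - r) - a % (n - r)) (a / (n - r))) ∧
      ∀ i : Fin r, colDeg L i + rowDeg R i = (d : WithBot ℕ)) := by
  constructor
  · rintro ⟨hnr, -, hev, hinf, hLN, hRN⟩
    obtain ⟨L, R, rfl, hL, hR, hsum⟩ := exists_minimal_factorization
      (fun i j => natDegree_le_iff_degree_le.mpr (hPdeg i j)) hnr hev hinf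
    refine ⟨L, R, rfl, hL, hR, ?_, ?_, hsum⟩
    · rwa [leftNull_mul_of_normalRank_eq (normalRank_eq_height_of_rank_map_eval (hR.1 0))] at hLN
    · rwa [rightNull_mul_of_normalRank_eq (normalRank_eq_width_of_rank_map_eval (hL.1 0))] at hRN
  · rintro ⟨L, R, rfl, ⟨hLev, hLred⟩, ⟨hRev, hRred⟩, hLN, hRN, hsum⟩
    have hLr : normalRank L = r := normalRank_eq_width_of_rank_map_eval (hLev 0)
    have hRr : normalRank R = r := normalRank_eq_height_of_rank_map_eval (hRev 0)
    have hinf : (coeffMatrix (L * R) d).rank = r :=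
      rank_coeffMatrix_mul hLred hRred fun i => (colDeg_add_rowDeg_eq_iff.mp (hsum i)).2.2
    have hinf0 : coeffMatrix (L * R) d ≠ 0 := fun h0 => by
      rw [h0, rank_zero] at hinf
      exact hr0.ne hinf
    exact ⟨(normalRank_mul_of_normalRank_eq hLr).trans hRr,
      matDeg_eq_of_coeffMatrix_ne_zero hPdeg hinf0,
      fun x => (rank_map_eval_mul_of_rank_eq (hLev x)).trans (hRev x), hinf,
      by rwa [leftNull_mul_of_normalRank_eq hRr], by rwa [rightNull_mul_of_normalRank_eq hLr]⟩

/-- Characterization of the polynomial matrices with the generic complete eigenstructure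
K_a, i.e. of orb(K_a): P has normal rank r, degree exactly d, no finite or infinite
eigenvalues (w.r.t. grade d) and prescribed minimal indices of its left and right
nullspaces, if and only if P = L R with L and R dual minimal bases with the prescribed
minimal indices of their nullspaces and matching column/row degrees summing to d. -/
theorem orbit_Ka_characterization
    {m n r d a : ℕ}
    (hm : 2 ≤ m) (hn : 2 ≤ n) (hd : 1 ≤ d) (hr0 : 0 < r) (hrm : r < m) (hrn : r < n)
    (ha : a ≤ r * d)
    (P : Matrix (Fin m) (Fin n) ℂ[X])
    (hPdeg : ∀ i j, (P i j).degree ≤ (d : WithBot ℕ)) :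
    (normalRank P = r ∧ matDeg P = (d : WithBot ℕ) ∧
      (∀ x : ℂ, (P.map (fun q => q.eval x)).rank = r) ∧
      (Matrix.of (fun (i : Fin m) (j : Fin n) => (P i j).coeff d) :
        Matrix (Fin m) (Fin n) ℂ).rank = r ∧
      HasMinIndices (leftNull P)
        (Multiset.replicate ((r * d - a) % (m - r)) ((r * d - a) / (m - r) + 1) +
         Multiset.replicate ((m - r) - (r * d - a) % (m - r)) ((r * d - a) / (m - r))) ∧
      HasMinIndices (rightNull P)
        (Multiset.replicate (a % (n - r)) (a / (n - r) + 1) +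
         Multiset.replicate ((n - r) - a % (n - r)) (a / (n - r))))
    ↔
    (∃ (L : Matrix (Fin m) (Fin r) ℂ[X]) (R : Matrix (Fin r) (Fin n) ℂ[X]),
      P = L * R ∧ IsMinimalColBasisC L ∧ IsMinimalRowBasisC R ∧
      HasMinIndices (leftNull L)
        (Multiset.replicate ((r * d - a) % (m - r)) ((r * d - a) / (m - r) + 1) +
         Multiset.replicate ((m - r) - (r * d - a) % (m - r)) ((r * d - a) / (m - r))) ∧
      HasMinIndices (rightNull R)
        (Multiset.replicate (a % (n - r)) (a / (n - r) + 1) +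
         Multiset.replicate ((n - r) - a % (n - r)) (a / (n - r))) ∧
      ∀ i : Fin r, colDeg L i + rowDeg R i = (d : WithBot ℕ)) :=
  orbit_Ka_characterization_general hr0 P hPdeg
end
end
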